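/- arXiv:1903.01756 — 2 statements merged into one kernel-verified Lean document; each statement's English description precedes it below -/
import Mathlib

section
/- Assume G' has no negative cycle. Let T be an SPT of G and T̂ an SPT of G', both rooted at s. Let x ∈ V and let u₀ be a vertex on the tree path π_{s,x} from s to x in T such that the subpath π_{s,x}[u₀, x] does not traverse e₀ and is also the tree path from u₀ to x in T̂. Then dist_{G'}(x) − dist_G(x) = dist_{G'}(u₀) − dist_G(u₀). -/
namespace DynSPT

variable {V : Type*}

/-- The list of consecutive edges of a path given as a list of vertices. -/
def edgeList (l : List V) : List (V × V) := l.zip l.tail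

/-- The length of a path with respect to the weight function `ω`. -/
def len (ω : V → V → ℝ) (l : List V) : ℝ :=
  ((edgeList l).map fun p => ω p.1 p.2).sum

/-- `l` is a path in the directed graph with edge relation `E`. -/
def IsWalk (E : V → V → Prop) (l : List V) : Prop := l ≠ [] ∧ l.Chain' E

/-- `l` is a path from `u` to `v` in the directed graph with edge relation `E`. -/
def IsWalkFrom (E : V → V → Prop) (l : List V) (u v : V) : Prop :=
  IsWalk E l ∧ l.head? = some u ∧ l.getLast? = some v

/-- The path `l` traverses the edge `e`. -/
def Traverses (l : List V) (e : V × V) : Prop := e ∈ edgeList l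

/-- `l` is a cycle: a path with at least one edge whose first and last vertices agree. -/
def IsCycle (E : V → V → Prop) (l : List V) : Prop :=
  ∃ v, IsWalkFrom E l v v ∧ 2 ≤ l.length

/-- The weighted directed graph `(E, ω)` has a negative cycle. -/
def HasNegCycle (E : V → V → Prop) (ω : V → V → ℝ) : Prop :=
  ∃ l, IsCycle E l ∧ len ω l < 0

/-- The weighted directed graph `(E, ω)` has a zero-length cycle. -/
def HasZeroCycle (E : V → V → Prop) (ω : V → V → ℝ) : Prop :=
  ∃ l, IsCycle E l ∧ len ω l = 0

/-- The distance from `s` to `v`: the infimum of the lengths of paths from `s` to `v`. -/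
noncomputable def dist (E : V → V → Prop) (ω : V → V → ℝ) (s v : V) : ℝ :=
  sInf {L : ℝ | ∃ l, IsWalkFrom E l s v ∧ len ω l = L}

/-- A spanning tree of the directed graph `E` rooted at `s`, recorded by the parent
function together with, for every vertex `v`, the tree path from `s` to `v`. -/
structure RootedTree (E : V → V → Prop) (s : V) where
  parent : V → V
  path : V → List V
  path_root : path s = [s]
  parent_edge : ∀ v, v ≠ s → E (parent v) v
  path_eq : ∀ v, v ≠ s → path v = path (parent v) ++ [v]
  path_isWalkFrom : ∀ v, IsWalkFrom E (path v) s v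

/-- `(a, b)` is an edge of the rooted tree `T`. -/
def RootedTree.IsEdge {E : V → V → Prop} {s : V} (T : RootedTree E s) (a b : V) : Prop :=
  b ≠ s ∧ T.parent b = a

/-- `T` is a shortest-path tree for the weight function `ω`:
every tree path from the root is a shortest path. -/
def IsSPT {E : V → V → Prop} {s : V} (ω : V → V → ℝ) (T : RootedTree E s) : Prop :=
  ∀ v, len ω (T.path v) = dist E ω s v

lemma len_singleton (ω : V → V → ℝ) (a : V) : len ω [a] = 0 := rfl

lemma len_cons_cons (ω : V → V → ℝ) (a b : V) (l : List V) :
    len ω (a :: b :: l) = ω a b + len ω (b :: l) := by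
  simp [len, edgeList]

lemma len_append_cons (ω : V → V → ℝ) (A : List V) (u : V) (B : List V) :
    len ω (A ++ u :: B) = len ω (A ++ [u]) + len ω (u :: B) := by
  induction A with
  | nil => simp [len_singleton]
  | cons a A ih =>
    cases A with
    | nil => simp [len_cons_cons, len_singleton]
    | cons a' A' =>
      simp only [List.cons_append, len_cons_cons] at *
      rw [ih]; ring

lemma len_congr {ω ω' : V → V → ℝ} {l : List V}
    (h : ∀ p ∈ edgeList l, ω' p.1 p.2 = ω p.1 p.2) : len ω' l = len ω l := by
  unfold len
  congr 1
  exact List.map_congr_left h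

lemma exists_split_of_dup : ∀ (l : List V) (a : V), List.Sublist [a, a] l →
    ∃ A B C : List V, l = A ++ a :: B ++ a :: C := by
  intro l
  induction l with
  | nil => intro a h; simp at h
  | cons x t ih =>
    intro a h
    cases h with
    | cons _ h' =>
      obtain ⟨A, B, C, rfl⟩ := ih a h'
      exact ⟨x :: A, B, C, rfl⟩
    | cons_cons _ h' =>
      have ha : x ∈ t := (List.singleton_sublist).mp h'
      obtain ⟨B, C, rfl⟩ := List.append_of_mem ha
      exact ⟨[], B, C, rfl⟩

lemma exists_nodup_len_le (E : V → V → Prop) (ω : V → V → ℝ) (hG : ¬ HasNegCycle E ω) :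
    ∀ (n : ℕ) (l : List V), l.length ≤ n → l.Chain' E →
      ∃ l', l'.Nodup ∧ len ω l' ≤ len ω l := by
  intro n
  induction n with
  | zero =>
    intro l hl _
    have : l = [] := List.length_eq_zero_iff.mp (Nat.le_zero.mp hl)
    exact ⟨l, this ▸ List.nodup_nil, le_rfl⟩
  | succ n ih =>
    intro l hl hc
    by_cases hnd : l.Nodup
    · exact ⟨l, hnd, le_rfl⟩
    · obtain ⟨a, ha⟩ := List.exists_duplicate_iff_not_nodup.mpr hnd
      obtain ⟨A, B, C, rfl⟩ := exists_split_of_dup l a (List.duplicate_iff_sublist.mp ha)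
      -- the cycle a :: B ++ [a]
      have hinfix : List.IsInfix (a :: (B ++ [a])) (A ++ a :: B ++ a :: C) :=
        ⟨A, C, by simp⟩
      have hcyc_chain : List.Chain' E (a :: (B ++ [a])) := hc.infix hinfix
      have hcyc : IsCycle E (a :: (B ++ [a])) := by
        refine ⟨a, ⟨⟨List.cons_ne_nil _ _, hcyc_chain⟩, rfl, ?_⟩, by simp⟩
        show (a :: (B ++ [a])).getLast? = some a
        rw [show a :: (B ++ [a]) = (a :: B) ++ [a] by simp]
        exact List.getLast?_concat
      have hcyc_nonneg : 0 ≤ len ω (a :: (B ++ [a])) := by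
        by_contra hlt
        exact hG ⟨_, hcyc, lt_of_not_ge hlt⟩
      -- the shortened walk
      have hc' : List.Chain' E (A ++ a :: C) := by
        rw [show A ++ a :: B ++ a :: C = A ++ (a :: (B ++ a :: C)) by simp] at hc
        obtain ⟨hA, hmid, hconn⟩ := List.isChain_append.mp hc
        have hsfx : List.Chain' E (a :: C) :=
          hmid.suffix ⟨a :: B, by simp⟩
        refine List.isChain_append.mpr ⟨hA, hsfx, ?_⟩
        intro p hp q hq
        exact hconn p hp q (by simpa using hq)
      have hlen : len ω (A ++ a :: C) ≤ len ω (A ++ a :: B ++ a :: C) := by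
        have e1 : len ω (A ++ a :: B ++ a :: C)
            = len ω (A ++ [a]) + len ω (a :: (B ++ a :: C)) := by
          rw [show A ++ a :: B ++ a :: C = A ++ (a :: (B ++ a :: C)) by simp,
            len_append_cons]
        have e2 : len ω (a :: (B ++ a :: C))
            = len ω (a :: B ++ [a]) + len ω (a :: C) := by
          rw [show a :: (B ++ a :: C) = (a :: B) ++ a :: C by simp, len_append_cons]
        have e3 : len ω (A ++ a :: C) = len ω (A ++ [a]) + len ω (a :: C) :=
          len_append_cons ω A a C
        have e4 : len ω (a :: B ++ [a]) = len ω (a :: (B ++ [a])) := by simp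
        rw [e1, e2, e3, e4]
        linarith
      have hlt : (A ++ a :: C).length ≤ n := by
        have := hl
        simp only [List.length_append, List.length_cons] at this ⊢
        omega
      obtain ⟨l', hnd', hle'⟩ := ih (A ++ a :: C) hlt hc'
      exact ⟨l', hnd', hle'.trans hlen⟩

lemma bddBelow_lens [Fintype V] (E : V → V → Prop) (ω : V → V → ℝ)
    (hG : ¬ HasNegCycle E ω) (s v : V) :
    BddBelow {L : ℝ | ∃ l, IsWalkFrom E l s v ∧ len ω l = L} := by
  have hfin : {l : List V | l.Nodup}.Finite :=
    (List.finite_length_le V (Fintype.card V)).subset fun l hl => hl.length_le_card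
  obtain ⟨b, hb⟩ := (hfin.image (len ω)).bddBelow
  refine ⟨b, fun L hL => ?_⟩
  obtain ⟨l, hwf, rfl⟩ := hL
  obtain ⟨l', hnd, hle⟩ := exists_nodup_len_le E ω hG l.length l le_rfl hwf.1.2
  exact (hb ⟨l', hnd, rfl⟩).trans hle

lemma dist_le [Fintype V] {E : V → V → Prop} {ω : V → V → ℝ}
    (hG : ¬ HasNegCycle E ω) {s v : V} {l : List V} (h : IsWalkFrom E l s v) :
    dist E ω s v ≤ len ω l :=
  csInf_le (bddBelow_lens E ω hG s v) ⟨l, h, rfl⟩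

theorem statement_6
    {V : Type*} [Fintype V] (E : V → V → Prop) (ω ω' : V → V → ℝ) (s x₀ y₀ : V)
    (hE₀ : E x₀ y₀)
    (hreach : ∀ v, ∃ l, IsWalkFrom E l s v)
    (hω' : ∀ a b, (a, b) ≠ (x₀, y₀) → ω' a b = ω a b)
    (hG : ¬ HasNegCycle E ω)
    (hG' : ¬ HasNegCycle E ω')
    (T Th : RootedTree E s) (hT : IsSPT ω T) (hTh : IsSPT ω' Th)
    (x u₀ : V) (l₁ l₂ : List V)
    (hdecomp : T.path x = l₁ ++ u₀ :: l₂)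
    (hnotrav : ¬ Traverses (u₀ :: l₂) (x₀, y₀))
    (hseg : Th.path x = Th.path u₀ ++ l₂) :
    dist E ω' s x - dist E ω s x = dist E ω' s u₀ - dist E ω s u₀ := by
  obtain ⟨⟨hxne, hxch⟩, hxhd, hxlast⟩ := T.path_isWalkFrom x
  rw [hdecomp] at hxch hxhd hxlast
  cases l₂ with
  | nil =>
    have h1 : (l₁ ++ [u₀]).getLast? = some u₀ := List.getLast?_concat
    have : u₀ = x := by
      have := h1.symm.trans hxlast
      simpa using this
    rw [this]
  | cons b l₂' =>
    -- basic facts on the segment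
    have hch2 : List.Chain' E (u₀ :: b :: l₂') := hxch.suffix ⟨l₁, rfl⟩
    have hEub : E u₀ b := (List.isChain_cons_cons.mp hch2).1
    have hchseg : List.Chain' E (b :: l₂') := (List.isChain_cons_cons.mp hch2).2
    have hch1 : List.Chain' E (l₁ ++ [u₀]) := hxch.prefix ⟨b :: l₂', by simp⟩
    have hlast2 : (b :: l₂').getLast? = some x := by
      rwa [List.getLast?_append_of_ne_nil _ (List.cons_ne_nil _ _),
        List.getLast?_cons_cons] at hxlast
    have hhd1 : (l₁ ++ [u₀]).head? = some s := by
      cases l₁ with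
      | nil => simpa using hxhd
      | cons a t => simpa using hxhd
    -- walk from s to u₀ along the tree path prefix
    have walk1 : IsWalkFrom E (l₁ ++ [u₀]) s u₀ :=
      ⟨⟨by simp, hch1⟩, hhd1, List.getLast?_concat⟩
    have h3 : dist E ω s u₀ ≤ len ω (l₁ ++ [u₀]) := dist_le hG walk1
    -- walk from s to x via T.path u₀ and the segment
    obtain ⟨⟨hune, huch⟩, huhd, hulast⟩ := T.path_isWalkFrom u₀
    have hPeq : (T.path u₀).dropLast ++ [u₀] = T.path u₀ :=
      List.dropLast_append_getLast? u₀ hulast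
    have walk2 : IsWalkFrom E (T.path u₀ ++ b :: l₂') s x := by
      refine ⟨⟨by simp [hune], ?_⟩, ?_, ?_⟩
      · refine List.isChain_append.mpr ⟨huch, hchseg, ?_⟩
        intro p hp q hq
        rw [hulast] at hp
        simp only [List.head?_cons, Option.mem_some_iff] at hp hq
        rw [← hp, ← hq]
        exact hEub
      · obtain ⟨hd, tl, hPc⟩ := List.exists_cons_of_ne_nil hune
        rw [hPc]
        rw [hPc] at huhd
        simpa using huhd
      · rw [List.getLast?_append_of_ne_nil _ (List.cons_ne_nil _ _)]
        exact hlast2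
    have hwalk2len : len ω (T.path u₀ ++ b :: l₂')
        = dist E ω s u₀ + len ω (u₀ :: b :: l₂') := by
      rw [← hPeq, List.append_assoc, List.singleton_append, len_append_cons, hPeq, hT u₀]
    have h4 : dist E ω s x ≤ dist E ω s u₀ + len ω (u₀ :: b :: l₂') :=
      hwalk2len ▸ dist_le hG walk2
    -- exact value of dist x in G
    have hlenx : dist E ω s x = len ω (l₁ ++ [u₀]) + len ω (u₀ :: b :: l₂') := by
      rw [← hT x, hdecomp, len_append_cons]
    have hdx : dist E ω s x = dist E ω s u₀ + len ω (u₀ :: b :: l₂') := by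
      linarith
    -- the segment has the same length in G'
    have hc' : len ω' (u₀ :: b :: l₂') = len ω (u₀ :: b :: l₂') := by
      refine len_congr fun p hp => hω' p.1 p.2 fun hpe => hnotrav ?_
      show (x₀, y₀) ∈ edgeList (u₀ :: b :: l₂')
      rw [← hpe]
      simpa using hp
    -- exact value of dist x in G'
    obtain ⟨⟨hune', _⟩, _, hulast'⟩ := Th.path_isWalkFrom u₀
    have hPeq' : (Th.path u₀).dropLast ++ [u₀] = Th.path u₀ :=
      List.dropLast_append_getLast? u₀ hulast'
    have hdx' : dist E ω' s x = dist E ω' s u₀ + len ω (u₀ :: b :: l₂') := by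
      rw [← hTh x, hseg, ← hPeq', List.append_assoc, List.singleton_append,
        len_append_cons, hPeq', hTh u₀, hc']
    rw [hdx, hdx']
    ring


end DynSPT
end

section
/- Suppose θ < 0, T is an SPT of G rooted at s, dist_G(x₀) + ω'(e₀) < dist_G(y₀), and y₀ lies on the tree path π_{s,x₀} from s to x₀ in T. Then the concatenation π_{s,x₀}[y₀, x₀] + (x₀, y₀) is a negative cycle of G'; in particular, G' has a negative cycle. -/
namespace DynSPT

variable {V : Type*}

lemma edgeList_split (a : List V) (x : V) (c : List V) :
    edgeList (a ++ x :: c) = edgeList (a ++ [x]) ++ edgeList (x :: c) := by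
  induction a with
  | nil => simp [edgeList]
  | cons h t ih =>
    cases t with
    | nil => rfl
    | cons h2 t2 =>
      simp only [List.cons_append, edgeList, List.zip, List.tail] at *
      simpa using ih

lemma len_split (ω : V → V → ℝ) (a : List V) (x : V) (c : List V) :
    len ω (a ++ x :: c) = len ω (a ++ [x]) + len ω (x :: c) := by
  unfold len
  rw [edgeList_split, List.map_append, List.sum_append]

lemma getLast?_append_cons (a : List V) (x : V) (m : List V) :
    (a ++ x :: m).getLast? = (x :: m).getLast? := by
  rw [List.getLast?_append]
  have : (x :: m).getLast?.isSome := by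
    rw [List.getLast?_isSome]; simp
  cases h : (x :: m).getLast? with
  | none => rw [h] at this; simp at this
  | some y => rfl

lemma head?_append_cons (a : List V) (x : V) (m m' : List V) :
    (a ++ x :: m).head? = (a ++ x :: m').head? := by
  cases a <;> simp

lemma len_mono (ω ω' : V → V → ℝ) (h : ∀ a b, ω' a b ≤ ω a b) (l : List V) :
    len ω' l ≤ len ω l := by
  unfold len
  exact List.sum_le_sum (fun p _ => h p.1 p.2)

lemma exists_dup {l : List V} (h : ¬ l.Nodup) :
    ∃ a x b c, l = a ++ x :: (b ++ x :: c) := by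
  induction l with
  | nil => simp at h
  | cons hd t ih =>
    rw [List.nodup_cons] at h
    by_cases hm : hd ∈ t
    · obtain ⟨b, c, rfl⟩ := List.append_of_mem hm
      exact ⟨[], hd, b, c, rfl⟩
    · obtain ⟨a, x, b, c, rfl⟩ := ih (fun hn => h ⟨hm, hn⟩)
      exact ⟨hd :: a, x, b, c, rfl⟩

lemma shorten [Fintype V] {E : V → V → Prop} {ω : V → V → ℝ}
    (hcyc : ∀ l, IsCycle E l → 0 ≤ len ω l) {u v : V} :
    ∀ (n : ℕ) (l : List V), l.length ≤ n → IsWalkFrom E l u v →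
      ∃ l', IsWalkFrom E l' u v ∧ l'.length ≤ Fintype.card V ∧ len ω l' ≤ len ω l := by
  intro n
  induction n with
  | zero =>
    intro l hl hw
    exact absurd (List.length_eq_zero_iff.mp (Nat.le_zero.mp hl)) hw.1.1
  | succ n ih =>
    intro l hl hw
    by_cases hcard : l.length ≤ Fintype.card V
    · exact ⟨l, hw, hcard, le_refl _⟩
    · have hnd : ¬ l.Nodup := fun hnd => hcard hnd.length_le_card
      obtain ⟨a, x, b, c, rfl⟩ := exists_dup hnd
      obtain ⟨⟨-, hchain⟩, hhead, hlast⟩ := hw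
      -- split chains
      have h1 := List.isChain_split.mp hchain
      have h2 : List.Chain' E ((x :: b) ++ x :: c) := h1.2
      have h3 := List.isChain_split.mp h2
      have hchain' : List.Chain' E (a ++ x :: c) :=
        List.isChain_split.mpr ⟨h1.1, h3.2⟩
      -- the removed cycle
      have hcycle : IsCycle E ((x :: b) ++ [x]) := by
        refine ⟨x, ⟨⟨by simp, h3.1⟩, by simp, ?_⟩, by simp⟩
        rw [List.getLast?_append]; rfl
      have hpos : 0 ≤ len ω ((x :: b) ++ [x]) := hcyc _ hcycle
      -- lengths
      have hlen1 : len ω (a ++ x :: (b ++ x :: c))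
          = len ω (a ++ [x]) + (len ω ((x :: b) ++ [x]) + len ω (x :: c)) := by
        rw [len_split]
        congr 1
        have : x :: (b ++ x :: c) = (x :: b) ++ x :: c := by simp
        rw [this, len_split]
      have hlen2 : len ω (a ++ x :: c) = len ω (a ++ [x]) + len ω (x :: c) :=
        len_split ω a x c
      have hwf' : IsWalkFrom E (a ++ x :: c) u v := by
        refine ⟨⟨by simp, hchain'⟩, ?_, ?_⟩
        · rw [head?_append_cons a x c (b ++ x :: c)]; exact hhead
        · rw [getLast?_append_cons]
          rw [getLast?_append_cons a x (b ++ x :: c)] at hlast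
          have : x :: (b ++ x :: c) = (x :: b) ++ x :: c := by simp
          rw [this, getLast?_append_cons] at hlast
          exact hlast
      have hlenlt : (a ++ x :: c).length ≤ n := by
        have := hl
        simp only [List.length_append, List.length_cons] at *
        omega
      obtain ⟨l', hw', hc', hle'⟩ := ih _ hlenlt hwf'
      exact ⟨l', hw', hc', by linarith⟩

lemma dist_le_len [Fintype V] {E : V → V → Prop} {ω : V → V → ℝ}
    (hG : ¬ HasNegCycle E ω) {u v : V} {l : List V} (hw : IsWalkFrom E l u v) :
    dist E ω u v ≤ len ω l := by
  have hcyc : ∀ m, IsCycle E m → 0 ≤ len ω m := by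
    intro m hm
    by_contra hneg
    exact hG ⟨m, hm, lt_of_not_ge hneg⟩
  have hfin : ({m : List V | m.length ≤ Fintype.card V}.image (len ω)).Finite :=
    (List.finite_length_le V (Fintype.card V)).image _
  obtain ⟨b, hb⟩ := hfin.bddBelow
  have hbdd : BddBelow {L : ℝ | ∃ m, IsWalkFrom E m u v ∧ len ω m = L} := by
    refine ⟨b, ?_⟩
    rintro L ⟨m, hm, rfl⟩
    obtain ⟨m', hw', hc', hle'⟩ := shorten hcyc m.length m le_rfl hm
    exact le_trans (hb ⟨m', hc', rfl⟩) hle'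
  exact csInf_le hbdd ⟨l, hw, rfl⟩

theorem statement_13
    {V : Type*} [Fintype V] (E : V → V → Prop) (ω ω' : V → V → ℝ) (s x₀ y₀ : V)
    (hE₀ : E x₀ y₀)
    (hreach : ∀ v, ∃ l, IsWalkFrom E l s v)
    (hω' : ∀ a b, (a, b) ≠ (x₀, y₀) → ω' a b = ω a b)
    (hG : ¬ HasNegCycle E ω)
    (hθ : ω' x₀ y₀ - ω x₀ y₀ < 0)
    (T : RootedTree E s) (hT : IsSPT ω T)
    (hlt : dist E ω s x₀ + ω' x₀ y₀ < dist E ω s y₀)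
    (l₁ l₂ : List V) (hdecomp : T.path x₀ = l₁ ++ y₀ :: l₂) :
    IsCycle E ((y₀ :: l₂) ++ [y₀]) ∧ len ω' ((y₀ :: l₂) ++ [y₀]) < 0 ∧
      HasNegCycle E ω'  := by

  have hwx := T.path_isWalkFrom x₀
  rw [hdecomp] at hwx
  obtain ⟨⟨-, hchain⟩, hhead, hlast⟩ := hwx
  have hc := List.isChain_split.mp hchain
  have hlast2 : (y₀ :: l₂).getLast? = some x₀ := by
    rw [getLast?_append_cons] at hlast; exact hlast
  have hω'le : ∀ a b, ω' a b ≤ ω a b := by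
    intro a b
    by_cases h : (a, b) = (x₀, y₀)
    · simp only [Prod.mk.injEq] at h
      obtain ⟨rfl, rfl⟩ := h
      linarith
    · rw [hω' a b h]
  have hcycC : IsCycle E ((y₀ :: l₂) ++ [y₀]) := by
    refine ⟨y₀, ⟨⟨by simp, ?_⟩, by simp, by rw [List.getLast?_append]; rfl⟩, ?_⟩
    · refine List.isChain_append.mpr ⟨hc.2, List.isChain_singleton _, ?_⟩
      intro p hp q hq
      rw [hlast2] at hp
      simp at hp hq
      subst hp; subst hq
      exact hE₀
    · simp
  have hne : (y₀ :: l₂) ≠ [] := by simp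
  have hglx : (y₀ :: l₂).getLast hne = x₀ := by
    have h := List.getLast?_eq_getLast (l := y₀ :: l₂) hne
    rw [hlast2] at h
    exact (Option.some_inj.mp h).symm
  have hdecC : (y₀ :: l₂) ++ [y₀] = (y₀ :: l₂).dropLast ++ x₀ :: [y₀] := by
    conv_lhs => rw [← List.dropLast_append_getLast hne, hglx]
    simp
  have hdl : (y₀ :: l₂).dropLast ++ [x₀] = y₀ :: l₂ := by
    conv_rhs => rw [← List.dropLast_append_getLast hne, hglx]
  have hpair : len ω' [x₀, y₀] = ω' x₀ y₀ := by
    simp [len, edgeList]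
  have hlenC : len ω' ((y₀ :: l₂) ++ [y₀]) = len ω' (y₀ :: l₂) + ω' x₀ y₀ := by
    rw [hdecC, len_split, hdl, hpair]
  have hmono := len_mono ω ω' hω'le (y₀ :: l₂)
  have hsplit := len_split ω l₁ y₀ l₂
  have hx := hT x₀
  rw [hdecomp] at hx
  have hpre : IsWalkFrom E (l₁ ++ [y₀]) s y₀ := by
    refine ⟨⟨by simp, hc.1⟩, ?_, by rw [List.getLast?_append]; rfl⟩
    rw [head?_append_cons l₁ y₀ [] l₂]; exact hhead
  have hdy := dist_le_len hG hpre
  refine ⟨hcycC, ?_, ?_⟩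
  · rw [hlenC]; linarith
  · exact ⟨_, hcycC, by rw [hlenC]; linarith⟩


end DynSPT
end
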